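/- For x, y ∈ ℝⁿ and p ≥ 1, the separable function φ(x) = (1/(p+1))∑ᵢ |xᵢ|^{p+1} satisfies φ(x) ≥ φ(y) + ⟨∇φ(y), x − y⟩ + (1/2^{p−1})·φ(x − y). -/

import Mathlib

/-!
It suffices to prove the inequality coordinatewise. With `ψ(t) = |t|^{p-1} t`, the derivative of
`t ↦ |t|^{p+1}/(p+1)`, the function
`G(t) = |t|^{p+1}/(p+1) - ψ(b)(t - b) - 2^{1-p}|t - b|^{p+1}/(p+1)`
has derivative `ψ(t) - ψ(b) - 2^{1-p} ψ(t - b)`, whose sign is that of `t - b` by the strong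
monotonicity `(u - v)^p ≤ 2^{p-1}(ψ(u) - ψ(v))` for `v ≤ u`. The latter follows from
superadditivity of `s ↦ s^p` when `u, v` have the same sign and from convexity of `s ↦ s^p`
when they do not. So `G` is minimal at `b`.
-/

open Set

noncomputable def signedRpow (p t : ℝ) : ℝ := |t| ^ (p - 1) * t

lemma signedRpow_of_nonneg {p t : ℝ} (hp : p ≠ 0) (ht : 0 ≤ t) : signedRpow p t = t ^ p := by
  rcases ht.eq_or_lt with rfl | ht
  · simp [signedRpow, Real.zero_rpow hp]
  · rw [signedRpow, abs_of_pos ht, ← Real.rpow_add_one ht.ne', sub_add_cancel]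

lemma signedRpow_neg (p t : ℝ) : signedRpow p (-t) = -signedRpow p t := by
  simp [signedRpow]

lemma signedRpow_of_nonpos {p t : ℝ} (hp : p ≠ 0) (ht : t ≤ 0) :
    signedRpow p t = -(-t) ^ p := by
  rw [← signedRpow_of_nonneg hp (neg_nonneg.2 ht), signedRpow_neg, neg_neg]

lemma Real.rpow_add_le_mul_rpow_add_rpow {p a b : ℝ} (ha : 0 ≤ a) (hb : 0 ≤ b)
    (hp : 1 ≤ p) :
    (a + b) ^ p ≤ 2 ^ (p - 1) * (a ^ p + b ^ p) := by
  lift a to NNReal using ha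
  lift b to NNReal using hb
  exact_mod_cast NNReal.rpow_add_le_mul_rpow_add_rpow a b hp

lemma rpow_sub_le_two_rpow_mul_signedRpow_sub {p u v : ℝ} (hp : 1 ≤ p) (hvu : v ≤ u) :
    (u - v) ^ p ≤ 2 ^ (p - 1) * (signedRpow p u - signedRpow p v) := by
  have hp0 : p ≠ 0 := by positivity
  have same_sign : ∀ {u v : ℝ}, 0 ≤ v → v ≤ u →
      (u - v) ^ p ≤ 2 ^ (p - 1) * (signedRpow p u - signedRpow p v) := by
    intro u v hv hvu
    have hsuper := Real.add_rpow_le_rpow_add (sub_nonneg.2 hvu) hv hp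
    have hone : (1 : ℝ) ≤ 2 ^ (p - 1) := Real.one_le_rpow one_le_two (by linarith)
    rw [sub_add_cancel] at hsuper
    rw [signedRpow_of_nonneg hp0 (hv.trans hvu), signedRpow_of_nonneg hp0 hv]
    exact (le_sub_iff_add_le.2 hsuper).trans
      (le_mul_of_one_le_left (by linarith [Real.rpow_nonneg (sub_nonneg.2 hvu) p]) hone)
  rcases le_total 0 v with hv | hv
  · exact same_sign hv hvu
  rcases le_total u 0 with hu | hu
  · have := same_sign (neg_nonneg.2 hu) (neg_le_neg hvu)
    rwa [neg_sub_neg, signedRpow_neg, signedRpow_neg, neg_sub_neg] at this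
  · have := Real.rpow_add_le_mul_rpow_add_rpow hu (neg_nonneg.2 hv) hp
    rwa [← sub_eq_add_neg, ← sub_neg_eq_add, ← signedRpow_of_nonneg hp0 hu,
      ← signedRpow_of_nonpos hp0 hv] at this

lemma hasDerivAt_one_div_mul_abs_rpow_add_one {p : ℝ} (hp : 0 < p) (t : ℝ) :
    HasDerivAt (fun s ↦ 1 / (p + 1) * |s| ^ (p + 1)) (signedRpow p t) t := by
  have h := (hasDerivAt_abs_rpow t (by linarith : 1 < p + 1)).const_mul (1 / (p + 1))
  refine h.congr_deriv ?_
  rw [signedRpow, show p + 1 - 2 = p - 1 by ring]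
  field_simp

lemma isMinOn_of_hasDerivAt_sign {f f' : ℝ → ℝ} {b : ℝ} (hf : ∀ t, HasDerivAt f (f' t) t)
    (hright : ∀ t, b < t → 0 ≤ f' t) (hleft : ∀ t, t < b → f' t ≤ 0) :
    IsMinOn f univ b := by
  have hcont : Continuous f := continuous_iff_continuousAt.2 fun t ↦ (hf t).continuousAt
  intro a _
  rcases le_total b a with hba | hab
  · refine monotoneOn_of_hasDerivWithinAt_nonneg (convex_Ici b) hcont.continuousOn
      (fun t _ ↦ (hf t).hasDerivWithinAt) (fun t ht ↦ hright t ?_) self_mem_Ici hba hba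
    rwa [interior_Ici] at ht
  · refine antitoneOn_of_hasDerivWithinAt_nonpos (convex_Iic b) hcont.continuousOn
      (fun t _ ↦ (hf t).hasDerivWithinAt) (fun t ht ↦ hleft t ?_) hab self_mem_Iic hab
    rwa [interior_Iic] at ht

lemma one_div_mul_abs_rpow_add_one_uniform_convex {p : ℝ} (hp : 1 ≤ p) (a b : ℝ) :
    1 / (p + 1) * |b| ^ (p + 1) + signedRpow p b * (a - b)
      + 1 / 2 ^ (p - 1) * (1 / (p + 1) * |a - b| ^ (p + 1)) ≤ 1 / (p + 1) * |a| ^ (p + 1) := by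
  have hp0 : 0 < p := by linarith
  have hc : 0 < (2 : ℝ) ^ (p - 1) := by positivity
  let G : ℝ → ℝ := fun t ↦ 1 / (p + 1) * |t| ^ (p + 1) - signedRpow p b * (t - b)
    - 1 / 2 ^ (p - 1) * (1 / (p + 1) * |t - b| ^ (p + 1))
  have hG : ∀ t, HasDerivAt G
      (signedRpow p t - signedRpow p b - 1 / 2 ^ (p - 1) * signedRpow p (t - b)) t := by
    intro t
    have hlin : HasDerivAt (fun s ↦ signedRpow p b * (s - b)) (signedRpow p b) t := by
      simpa using ((hasDerivAt_id t).sub_const b).const_mul (signedRpow p b)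
    have hshift := (hasDerivAt_one_div_mul_abs_rpow_add_one hp0 (t - b)).comp_sub_const t b
    exact ((hasDerivAt_one_div_mul_abs_rpow_add_one hp0 t).sub hlin).sub
      (hshift.const_mul (1 / 2 ^ (p - 1)))
  have hmin := isMinOn_of_hasDerivAt_sign hG (b := b) ?_ ?_ (mem_univ a)
  · simp only [G, mem_ofPred_eq, sub_self, mul_zero, sub_zero, abs_zero,
      Real.zero_rpow (by linarith : p + 1 ≠ 0)] at hmin
    linarith
  · intro t hbt
    have h := rpow_sub_le_two_rpow_mul_signedRpow_sub hp hbt.le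
    rw [← div_le_iff₀' hc, ← one_div_mul_eq_div] at h
    rw [signedRpow_of_nonneg hp0.ne' (sub_nonneg.2 hbt.le)]
    linarith
  · intro t htb
    have h := rpow_sub_le_two_rpow_mul_signedRpow_sub hp htb.le
    rw [← div_le_iff₀' hc, ← one_div_mul_eq_div] at h
    rw [signedRpow_of_nonpos hp0.ne' (sub_nonpos.2 htb.le), neg_sub, mul_neg]
    linarith

/-- Uniform convexity inequality for the separable function
`φ(x) = (1/(p+1)) ∑ᵢ |xᵢ|^{p+1}` on `ℝⁿ`:
`φ(x) ≥ φ(y) + ⟨∇φ(y), x − y⟩ + 2^{1−p} φ(x − y)`,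
where `∇φ(y)ᵢ = |yᵢ|^{p−1} yᵢ`. -/
theorem stmt2 (n : ℕ) (p : ℝ) (hp : 1 ≤ p) (x y : Fin n → ℝ) :
    (1 / (p + 1)) * ∑ i, |x i| ^ (p + 1) ≥
      (1 / (p + 1)) * ∑ i, |y i| ^ (p + 1)
        + ∑ i, (|y i| ^ (p - 1) * y i) * (x i - y i)
        + (1 / 2 ^ (p - 1)) * ((1 / (p + 1)) * ∑ i, |x i - y i| ^ (p + 1)) := by
  simp only [ge_iff_le, Finset.mul_sum, ← Finset.sum_add_distrib]
  exact Finset.sum_le_sum fun i _ ↦ one_div_mul_abs_rpow_add_one_uniform_convex hp (x i) (y i)
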